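/- arXiv:1610.01750 — 2 statements merged into one kernel-verified Lean document; each statement's English description precedes it below -/
import Mathlib

section
/- If X is an ultrametric space and Y is a dense subspace of X, then the set of nonzero distances realized in Y equals the set of nonzero distances realized in X, i.e., R(Y) = R(X) where R(Z) = {d(x,y) : x,y ∈ Z, x ≠ y}. -/
/-! Since every triangle in an ultrametric space is isosceles, moving both endpoints of a segment
by less than its length leaves its length unchanged; density of `Y` supplies such moves into `Y`. -/

namespace IsUltrametricDist

variable {X : Type*} [PseudoMetricSpace X] [IsUltrametricDist X]

lemma dist_eq_of_dist_lt {x x' y : X} (h : dist x' x < dist x y) : dist x' y = dist x y := by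
  rw [dist_eq_max_of_dist_ne_dist x' x y h.ne, max_eq_right h.le]

lemma dist_eq_of_dist_lt_of_dist_lt {x x' y y' : X} (hx : dist x' x < dist x y)
    (hy : dist y' y < dist x y) : dist x' y' = dist x y := by
  have hx'y : dist x' y = dist x y := dist_eq_of_dist_lt hx
  calc dist x' y' = dist y' x' := dist_comm _ _
    _ = dist y x' := dist_eq_of_dist_lt (by rwa [dist_comm y x', hx'y])
    _ = dist x y := by rw [dist_comm, hx'y]

end IsUltrametricDist

/-- If `Y` is a dense subset of an ultrametric space `X`, then the set of nonzero distances
realized in `Y` equals the set of nonzero distances realized in `X`. -/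
theorem ultrametric_dense_realized_distances {X : Type*} [MetricSpace X] [IsUltrametricDist X]
    (Y : Set X) (hY : Dense Y) :
    {r : ℝ | ∃ x ∈ Y, ∃ y ∈ Y, x ≠ y ∧ dist x y = r} =
      {r : ℝ | ∃ x y : X, x ≠ y ∧ dist x y = r} := by
  ext r
  refine ⟨fun ⟨x, _, y, _, hxy, hr⟩ ↦ ⟨x, y, hxy, hr⟩, ?_⟩
  rintro ⟨x, y, hxy, rfl⟩
  have hpos : 0 < dist x y := dist_pos.2 hxy
  obtain ⟨x', hx', hx'Y⟩ := Metric.dense_iff.1 hY x _ hpos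
  obtain ⟨y', hy', hy'Y⟩ := Metric.dense_iff.1 hY y _ hpos
  have hdist := IsUltrametricDist.dist_eq_of_dist_lt_of_dist_lt hx' hy'
  exact ⟨x', hx'Y, y', hy'Y, dist_pos.1 (hdist ▸ hpos), hdist⟩
end

section
/- Let (X_m, d_m) and (Y_m, d_m') for m ∈ ℕ be ultrametric spaces with all nonzero distances < r, and let X, Y be their disjoint unions with cross-distance r as above. Then X and Y are isometric if and only if there is a bijection f : ℕ → ℕ such that X_m is isometric to Y_{f(m)} for every m. -/
open Classical in
noncomputable def sigmaDist {X : ℕ → Type u} (d : ∀ m, X m → X m → ℝ) (r : ℝ)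
    (p q : Σ m, X m) : ℝ :=
  if h : p.1 = q.1 then d q.1 (h ▸ p.2) q.2 else r

/-!
Two distinct points lie in the same piece exactly when their distance is less than `r`, so an
isometry `X ≃ Y` maps pieces onto pieces. It is therefore `Sigma.map f ψ` for a map `f` of
indices and maps `ψ m` of pieces; `f` is a bijection because all pieces are nonempty, and each
`ψ m` is a bijective isometry.
-/

open Function

section SigmaMap

variable {ι κ : Type*} {X : ι → Type*} {Y : κ → Type*}

theorem exists_eq_sigma_map_of_fst_eq {φ : (Σ i, X i) → Σ j, Y j} {f : ι → κ}
    (h : ∀ p, (φ p).1 = f p.1) : ∃ ψ : ∀ i, X i → Y (f i), φ = Sigma.map f ψ :=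
  ⟨fun i x => h ⟨i, x⟩ ▸ (φ ⟨i, x⟩).2,
    funext fun p => Sigma.ext (h p) (eqRec_heq _ _).symm⟩

theorem Function.Surjective.of_sigma_map {f : ι → κ} {ψ : ∀ i, X i → Y (f i)}
    (h : Surjective (Sigma.map f ψ)) (hf : Injective f) (i : ι) : Surjective (ψ i) := by
  intro y
  obtain ⟨⟨j, x⟩, hx⟩ := h ⟨f i, y⟩
  obtain rfl : j = i := hf (congrArg Sigma.fst hx)
  exact ⟨x, sigma_mk_injective hx⟩

theorem exists_bijective_eq_sigma_map {φ : (Σ i, X i) → Σ j, Y j} (hφ : Bijective φ)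
    (hX : ∀ i, Nonempty (X i)) (hY : ∀ j, Nonempty (Y j))
    (hfib : ∀ p q, (φ p).1 = (φ q).1 ↔ p.1 = q.1) :
    ∃ f : ι → κ, Bijective f ∧
      ∃ ψ : ∀ i, X i → Y (f i), (∀ i, Bijective (ψ i)) ∧ φ = Sigma.map f ψ := by
  let x₀ : ∀ i, X i := fun i => (hX i).some
  set f : ι → κ := fun i => (φ ⟨i, x₀ i⟩).1
  have hf_inj : Injective f := fun i j h => (hfib ⟨i, x₀ i⟩ ⟨j, x₀ j⟩).1 h
  obtain ⟨ψ, hφψ⟩ : ∃ ψ : ∀ i, X i → Y (f i), φ = Sigma.map f ψ :=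
    exists_eq_sigma_map_of_fst_eq fun p => (hfib p ⟨p.1, x₀ p.1⟩).2 rfl
  rw [hφψ] at hφ
  have hf_surj : Surjective f := fun j =>
    let ⟨p, hp⟩ := hφ.2 ⟨j, (hY j).some⟩
    ⟨p.1, congrArg Sigma.fst hp⟩
  exact ⟨f, ⟨hf_inj, hf_surj⟩, ψ,
    fun i => ⟨hφ.1.of_sigma_map i, hφ.2.of_sigma_map hf_inj i⟩, hφψ⟩

end SigmaMap

section SigmaDist

variable {X Y : ℕ → Type u} {d : ∀ m, X m → X m → ℝ} {d' : ∀ m, Y m → Y m → ℝ} {r : ℝ}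

theorem sigmaDist_mk_mk (m : ℕ) (x y : X m) : sigmaDist d r ⟨m, x⟩ ⟨m, y⟩ = d m x y := by
  simp [sigmaDist]

theorem sigmaDist_of_fst_ne {p q : Σ m, X m} (h : p.1 ≠ q.1) : sigmaDist d r p q = r :=
  dif_neg h

theorem sigmaDist_lt_iff_fst_eq (hlt : ∀ m x y, x ≠ y → d m x y < r) {p q : Σ m, X m}
    (hpq : p ≠ q) : sigmaDist d r p q < r ↔ p.1 = q.1 := by
  obtain ⟨m, x⟩ := p
  obtain ⟨n, y⟩ := q
  refine ⟨fun h => by_contra fun hmn => (sigmaDist_of_fst_ne hmn ▸ h).false, ?_⟩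
  rintro (rfl : m = n)
  rw [sigmaDist_mk_mk]
  exact hlt m x y fun hxy => hpq (hxy ▸ rfl)

theorem fst_eq_iff_of_sigmaDist_eq (hXlt : ∀ m x y, x ≠ y → d m x y < r)
    (hYlt : ∀ m x y, x ≠ y → d' m x y < r) {φ : (Σ m, X m) → Σ m, Y m} (hφ : Injective φ)
    (hiso : ∀ p q, sigmaDist d' r (φ p) (φ q) = sigmaDist d r p q) (p q : Σ m, X m) :
    (φ p).1 = (φ q).1 ↔ p.1 = q.1 := by
  rcases eq_or_ne p q with rfl | hpq
  · exact iff_of_true rfl rfl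
  rw [← sigmaDist_lt_iff_fst_eq hXlt hpq, ← sigmaDist_lt_iff_fst_eq hYlt (hφ.ne hpq), hiso]

theorem sigmaDist_sigma_map {f : ℕ → ℕ} (hf : Injective f) {ψ : ∀ m, X m → Y (f m)}
    (hψ : ∀ m x y, d' (f m) (ψ m x) (ψ m y) = d m x y) (p q : Σ m, X m) :
    sigmaDist d' r (Sigma.map f ψ p) (Sigma.map f ψ q) = sigmaDist d r p q := by
  obtain ⟨m, x⟩ := p
  obtain ⟨n, y⟩ := q
  rcases eq_or_ne m n with rfl | hmn
  · simp only [Sigma.map_mk, sigmaDist_mk_mk, hψ]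
  · exact (sigmaDist_of_fst_ne (hf.ne hmn)).trans (sigmaDist_of_fst_ne hmn).symm

end SigmaDist

theorem sigmaDist_isometric_iff_general {X Y : ℕ → Type u}
    (d : ∀ m, X m → X m → ℝ) (d' : ∀ m, Y m → Y m → ℝ) (r : ℝ)
    (hXne : ∀ m, Nonempty (X m)) (hYne : ∀ m, Nonempty (Y m))
    (hXlt : ∀ m x y, x ≠ y → d m x y < r)
    (hYlt : ∀ m x y, x ≠ y → d' m x y < r) :
    (∃ φ : (Σ m, X m) → (Σ m, Y m), Function.Bijective φ ∧
        ∀ p q, sigmaDist d' r (φ p) (φ q) = sigmaDist d r p q) ↔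
    (∃ f : ℕ → ℕ, Function.Bijective f ∧
        ∀ m, ∃ ψ : X m → Y (f m), Function.Bijective ψ ∧
          ∀ x y, d' (f m) (ψ x) (ψ y) = d m x y) := by
  constructor
  · rintro ⟨φ, hφ, hiso⟩
    obtain ⟨f, hf, ψ, hψ, rfl⟩ := exists_bijective_eq_sigma_map hφ hXne hYne
      (fst_eq_iff_of_sigmaDist_eq hXlt hYlt hφ.1 hiso)
    refine ⟨f, hf, fun m => ⟨ψ m, hψ m, fun x y => ?_⟩⟩
    simpa only [Sigma.map_mk, sigmaDist_mk_mk] using hiso ⟨m, x⟩ ⟨m, y⟩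
  · rintro ⟨f, hf, hψ⟩
    choose ψ hψ hψd using hψ
    exact ⟨Sigma.map f ψ, ⟨hf.1.sigma_map fun m => (hψ m).1, hf.2.sigma_map fun m => (hψ m).2⟩,
      sigmaDist_sigma_map hf.1 hψd⟩

/-- Let `(X_m, d_m)` and `(Y_m, d'_m)` be nonempty ultrametric spaces with all nonzero
distances strictly less than `r`, and let `X`, `Y` be their disjoint unions with
cross-distance `r`. Then `X` and `Y` are isometric iff there is a bijection
`f : ℕ → ℕ` with `X_m` isometric to `Y_{f(m)}` for every `m`. -/
theorem sigmaDist_isometric_iff {X Y : ℕ → Type u}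
    (d : ∀ m, X m → X m → ℝ) (d' : ∀ m, Y m → Y m → ℝ) (r : ℝ) (hrpos : 0 < r)
    (hXne : ∀ m, Nonempty (X m)) (hYne : ∀ m, Nonempty (Y m))
    (hXself : ∀ m x, d m x x = 0) (hXpos : ∀ m x y, x ≠ y → 0 < d m x y)
    (hXsymm : ∀ m x y, d m x y = d m y x)
    (hXultra : ∀ m x y z, d m x z ≤ max (d m x y) (d m y z))
    (hXlt : ∀ m x y, x ≠ y → d m x y < r)
    (hYself : ∀ m x, d' m x x = 0) (hYpos : ∀ m x y, x ≠ y → 0 < d' m x y)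
    (hYsymm : ∀ m x y, d' m x y = d' m y x)
    (hYultra : ∀ m x y z, d' m x z ≤ max (d' m x y) (d' m y z))
    (hYlt : ∀ m x y, x ≠ y → d' m x y < r) :
    (∃ φ : (Σ m, X m) → (Σ m, Y m), Function.Bijective φ ∧
        ∀ p q, sigmaDist d' r (φ p) (φ q) = sigmaDist d r p q) ↔
    (∃ f : ℕ → ℕ, Function.Bijective f ∧
        ∀ m, ∃ ψ : X m → Y (f m), Function.Bijective ψ ∧
          ∀ x y, d' (f m) (ψ x) (ψ y) = d m x y) :=
  sigmaDist_isometric_iff_general d d' r hXne hYne hXlt hYlt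
end
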